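/- Let n ≥ 5 with n ≡ 2 (mod 3), and let x_0,...,x_{n-1} be nonnegative integers (indices modulo n) with x_i ≤ 1 and x_i + x_{i+1} + x_{i+2} ≥ 2 for all i. Then Σ_{i=0}^{n-1} x_i ≥ 2⌊n/3⌋ + 2. -/

import Mathlib

/-!
Summing the window condition `x i + x (i+1) + x (i+2) ≥ 2` over all `n` positions counts every
`x i` exactly three times, so `3 * ∑ x ≥ 2 * n = 6 * (n / 3) + 4`, and the integrality of the sum
gives `∑ x ≥ 2 * (n / 3) + 2`.
-/

open Finset

theorem ZMod.sum_range_natCast {M : Type*} [AddCommMonoid M] (n : ℕ) [NeZero n]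
    (f : ZMod n → M) : ∑ i ∈ range n, f i = ∑ j, f j :=
  sum_nbij' Nat.cast ZMod.val (fun _ _ => mem_univ _) (fun j _ => mem_range.2 j.val_lt)
    (fun _ hi => ZMod.val_cast_of_lt (mem_range.1 hi)) (fun j _ => ZMod.natCast_zmod_val j)
    fun _ _ => rfl

section Windows

variable {G : Type*} [AddCommGroup G] [Fintype G]

theorem sum_window_three {M : Type*} [AddCommMonoid M] (x : G → M) (a b : G) :
    ∑ j, (x j + x (j + a) + x (j + b)) = 3 • ∑ j, x j := by
  rw [sum_add_distrib, sum_add_distrib,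
    Fintype.sum_equiv (Equiv.addRight a) (x <| · + a) x fun _ => rfl,
    Fintype.sum_equiv (Equiv.addRight b) (x <| · + b) x fun _ => rfl, succ_nsmul, two_nsmul]

theorem card_mul_le_three_mul_sum_of_le_window (x : G → ℕ) (a b : G) {m : ℕ}
    (hwin : ∀ j, m ≤ x j + x (j + a) + x (j + b)) :
    Fintype.card G * m ≤ 3 * ∑ j, x j :=
  calc Fintype.card G * m = ∑ _j : G, m := by simp
    _ ≤ ∑ j, (x j + x (j + a) + x (j + b)) := sum_le_sum fun j _ => hwin j
    _ = 3 * ∑ j, x j := sum_window_three x a b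

end Windows

theorem lower_bound_2_mod_3_general (n : ℕ) (h3 : n % 3 = 2) (x : ZMod n → ℕ)
    (hsum : ∀ i, 2 ≤ x i + x (i + 1) + x (i + 2)) :
    2 * (n / 3) + 2 ≤ ∑ i ∈ Finset.range n, x (i : ZMod n) := by
  have : NeZero n := ⟨by omega⟩
  have key := card_mul_le_three_mul_sum_of_le_window x 1 2 hsum
  rw [ZMod.card] at key
  rw [ZMod.sum_range_natCast]
  omega

theorem lower_bound_2_mod_3 (n : ℕ) (hn : 5 ≤ n) (h3 : n % 3 = 2) (x : ZMod n → ℕ)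
    (hle : ∀ i, x i ≤ 1) (hsum : ∀ i, 2 ≤ x i + x (i + 1) + x (i + 2)) :
    2 * (n / 3) + 2 ≤ ∑ i ∈ Finset.range n, x (i : ZMod n) :=
  lower_bound_2_mod_3_general n h3 x hsum
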